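/- Let H be a Hopf algebra over k, (V,Y,1,s) an H-module vertex algebra, and M any left H-module. Then (V⊗M, Y_{V⊗M}, s⊗Id), where Y_{V⊗M}(a#h,z)(b⊗m) = Σ Y(a,z)(h_1 b) ⊗ h_2 m for a#h ∈ V#H, b ∈ V, m ∈ M, is a left module over the S-local vertex algebra V#H; in particular it satisfies the module S-locality: for all a#h, b#g ∈ V#H there exists n with (z−w)^n Y_{V⊗M}(a#h,z)Y_{V⊗M}(b#g,w) = (z−w)^n Σ Y_{V⊗M}(h_1 b#1,w)Y_{V⊗M}(a#h_2 g,z). -/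

import Mathlib

/-!
On `V ⊗ M` the field of `a # h` is `(Y(a, z) ⊗ id) ∘ h`, where `h` acts diagonally through
`Δ(h)`; for `M = H` these are the fields of `V # H`. The maps `V # H → V ⊗ M`,
`c # f ↦ c ⊗ f x`, come from `H`-linear maps `H → M`, so they intertwine the two families of
fields, and their images span `V ⊗ M`. Every module axiom is additive in the vector acted on,
so it is inherited from the corresponding axiom of the field algebra `V # H`.

The explicit `S`-locality is proved directly. Coassociativity and `h(bₙc) = ∑ (h₁b)ₙ(h₂c)` give
`h ∘ Y(b, w) = ∑ Y(h₁b, w) ∘ h₂` on `V ⊗ M` (writing `Y` for `Y ⊗ id`), hence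
`Y(a#h, z) Y(b#g, w) = ∑ Y(a, z) Y(h₁b, w) (h₂g)` and
`Y(h₁b#1, w) Y(a#h₂g, z) = Y(h₁b, w) Y(a, z) (h₂g)`, and locality in `V` of the finitely many pairs `(a, h₁b)` finishes the proof.
-/

open scoped TensorProduct DirectSum

namespace HopfVA

/-- Generalized binomial coefficient `C(r, j)` for an integer `r` (exact division). -/
def ibinom (r : ℤ) (j : ℕ) : ℤ := (∏ i ∈ Finset.range j, (r - (i : ℤ))) / (j.factorial : ℤ)

/-- `(-1)^q` for an integer exponent `q`. -/
def negOnePow (q : ℤ) : ℤ := if Even q then 1 else -1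

section Core

variable {k : Type*} [CommRing k] {V : Type*} [AddCommGroup V] [Module k V]

/-- If `f p q` is the coefficient of `z^p w^q` of a two-variable formal distribution,
then `zwMul n f p q` is the coefficient of `z^p w^q` of `(z-w)^n` times that distribution. -/
def zwMul (n : ℕ) (f : ℤ → ℤ → V) : ℤ → ℤ → V := fun p q =>
  ∑ i ∈ Finset.range (n + 1),
    ((-1 : ℤ) ^ i * (n.choose i : ℤ)) • f (p - ((n : ℤ) - (i : ℤ))) (q - (i : ℤ))

/-- The data of a state-field correspondence on a pointed vector space:
`Y a n b` is the `n`-th product `a_n b` (so that `Y(a,z)b = ∑ (a_n b) z^{-n-1}`),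
`vac` is the vacuum vector and `T` is the translation operator. -/
structure VAData (k V : Type*) [CommRing k] [AddCommGroup V] [Module k V] where
  Y : V →ₗ[k] ℤ → Module.End k V
  vac : V
  T : Module.End k V

namespace VAData

variable (F : VAData k V)

/-- coefficient of `z^p w^q` in `Y(a,z)Y(b,w)c`. -/
def prodZW (a b c : V) : ℤ → ℤ → V := fun p q => F.Y a (-p - 1) (F.Y b (-q - 1) c)

/-- coefficient of `z^p w^q` in `Y(b,w)Y(a,z)c`. -/
def prodWZ (a b c : V) : ℤ → ℤ → V := fun p q => F.Y b (-q - 1) (F.Y a (-p - 1) c)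

/-- coefficient of `z^p w^q` in `i_{z,w} Y(a,z-w)Y(b,-w)c`. -/
noncomputable def compLHS (a b c : V) : ℤ → ℤ → V := fun p q =>
  negOnePow q •
    ∑ᶠ j : ℕ, ibinom (p + (j : ℤ)) j • F.Y a (-p - 1 - (j : ℤ)) (F.Y b ((j : ℤ) - 1 - q) c)

/-- Truncated (at `j < J`) version of `compLHS`, for `h`-adic statements. -/
def compLHStr (J : ℕ) (a b c : V) : ℤ → ℤ → V := fun p q =>
  negOnePow q •
    ∑ j ∈ Finset.range J, ibinom (p + (j : ℤ)) j • F.Y a (-p - 1 - (j : ℤ)) (F.Y b ((j : ℤ) - 1 - q) c)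

/-- coefficient of `z^p w^q` in `Y(Y(a,z)b,-w)c`. -/
def compRHS (a b c : V) : ℤ → ℤ → V := fun p q =>
  negOnePow q • F.Y (F.Y a (-p - 1) b) (-q - 1) c

/-- The axioms of a state-field correspondence: truncation, the vacuum axioms
`Y(1,z)a = a`, `Y(a,z)1 = a + (Ta)z + ⋯ ∈ V[[z]]`, and translation covariance
`[T, Y(a,z)] = Y(Ta,z) = ∂_z Y(a,z)`. -/
def IsStateField : Prop :=
  (∀ a b : V, ∃ N : ℤ, ∀ n : ℤ, N ≤ n → F.Y a n b = 0) ∧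
  (∀ (a : V) (n : ℤ), F.Y F.vac n a = if n = -1 then a else 0) ∧
  (∀ (a : V) (n : ℤ), 0 ≤ n → F.Y a n F.vac = 0) ∧
  (∀ a : V, F.Y a (-1) F.vac = a) ∧
  (∀ a : V, F.Y a (-2) F.vac = F.T a) ∧
  (∀ (a b : V) (n : ℤ), F.Y (F.T a) n b = F.T (F.Y a n b) - F.Y a n (F.T b)) ∧
  (∀ (a b : V) (n : ℤ), F.Y (F.T a) n b = (-n : ℤ) • F.Y a (n - 1) b)

/-- The associativity relation
`(z-w)^N i_{z,w} Y(a,z-w)Y(b,-w)c = (z-w)^N Y(Y(a,z)b,-w)c`. -/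
def IsAssocFA : Prop := ∀ a b c : V, ∃ N : ℕ, ∀ p q : ℤ,
  zwMul N (F.compLHS a b c) p q = zwMul N (F.compRHS a b c) p q

/-- A field algebra is a state-field correspondence satisfying associativity. -/
def IsFieldAlgebra : Prop := F.IsStateField ∧ F.IsAssocFA

/-- `(z-w)^n [Y(a,z), Y(b,w)] = 0`. -/
def IsLocalPair (a b : V) : Prop :=
  ∃ n : ℕ, ∀ (c : V) (p q : ℤ), zwMul n (F.prodZW a b c) p q = zwMul n (F.prodWZ a b c) p q

/-- A vertex algebra is a field algebra all of whose pairs of fields are local. -/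
def IsVertexAlgebra : Prop := F.IsFieldAlgebra ∧ ∀ a b : V, F.IsLocalPair a b

/-- `(z-w)^n Y(a,z)Y(b,w) = (z-w)^n ∑ᵢ Y(bⁱ,w)Y(aⁱ,z)`. -/
def IsSLocalPair (a b : V) : Prop :=
  ∃ (n m : ℕ) (A B : Fin m → V), ∀ (c : V) (p q : ℤ),
    zwMul n (F.prodZW a b c) p q = ∑ i, zwMul n (F.prodWZ (A i) (B i) c) p q

/-- An `S`-local vertex algebra is a field algebra all of whose pairs of fields
are `S`-local. -/
def IsSLocalVA : Prop := F.IsFieldAlgebra ∧ ∀ a b : V, F.IsSLocalPair a b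

end VAData

/-- Data of a module over a field algebra: the module fields `Y^M` and translation `sM`. -/
structure VModData (k V M : Type*) [CommRing k] [AddCommGroup V] [Module k V]
    [AddCommGroup M] [Module k M] where
  YM : V →ₗ[k] ℤ → Module.End k M
  sM : Module.End k M

namespace VModData

variable {M : Type*} [AddCommGroup M] [Module k M]

/-- coefficient of `z^p w^q` in `Y^M(a,z)Y^M(b,w)x`. -/
def mprodZW (Mo : VModData k V M) (a b : V) (x : M) : ℤ → ℤ → M := fun p q =>
  Mo.YM a (-p - 1) (Mo.YM b (-q - 1) x)

/-- coefficient of `z^p w^q` in `Y^M(b,w)Y^M(a,z)x`. -/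
def mprodWZ (Mo : VModData k V M) (a b : V) (x : M) : ℤ → ℤ → M := fun p q =>
  Mo.YM b (-q - 1) (Mo.YM a (-p - 1) x)

/-- coefficient of `z^p w^q` in `i_{z,w} Y^M(a,z-w)Y^M(b,-w)x`. -/
noncomputable def mcompLHS (Mo : VModData k V M) (a b : V) (x : M) : ℤ → ℤ → M := fun p q =>
  negOnePow q •
    ∑ᶠ j : ℕ, ibinom (p + (j : ℤ)) j • Mo.YM a (-p - 1 - (j : ℤ)) (Mo.YM b ((j : ℤ) - 1 - q) x)

/-- coefficient of `z^p w^q` in `Y^M(Y(a,z)b,-w)x`. -/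
def mcompRHS (F : VAData k V) (Mo : VModData k V M) (a b : V) (x : M) : ℤ → ℤ → M := fun p q =>
  negOnePow q • Mo.YM (F.Y a (-p - 1) b) (-q - 1) x

/-- `M` is a left module over the field algebra `F`: truncation, vacuum, translation
invariance and the associativity axiom. -/
def IsModule (F : VAData k V) (Mo : VModData k V M) : Prop :=
  (∀ (a : V) (x : M), ∃ N : ℤ, ∀ n : ℤ, N ≤ n → Mo.YM a n x = 0) ∧
  (∀ (x : M) (n : ℤ), Mo.YM F.vac n x = if n = -1 then x else 0) ∧
  (∀ (a : V) (x : M) (n : ℤ),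
      Mo.sM (Mo.YM a n x) - Mo.YM a n (Mo.sM x) = (-n : ℤ) • Mo.YM a (n - 1) x) ∧
  (∀ (a b : V) (x : M), ∃ N : ℕ, ∀ p q : ℤ,
      zwMul N (mcompLHS Mo a b x) p q = zwMul N (mcompRHS F Mo a b x) p q)

/-- Locality of the module fields `Y^M(a,z)`, `Y^M(b,w)`. -/
def IsLocalModPair (Mo : VModData k V M) (a b : V) : Prop :=
  ∃ n : ℕ, ∀ (x : M) (p q : ℤ),
    zwMul n (mprodZW Mo a b x) p q = zwMul n (mprodWZ Mo a b x) p q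

/-- `S`-locality of the module fields. -/
def IsSLocalModPair (Mo : VModData k V M) (a b : V) : Prop :=
  ∃ (n m : ℕ) (A B : Fin m → V), ∀ (x : M) (p q : ℤ),
    zwMul n (mprodZW Mo a b x) p q = ∑ i, zwMul n (mprodWZ Mo (A i) (B i) x) p q

end VModData

/-- The `f`-product `a_(f) b = Res_z f(z) Y(a,z) b`, where `f n` is the coefficient
of `z^n` in `f`. -/
noncomputable def fProduct (F : VAData k V) (f : ℤ → k) (a b : V) : V :=
  ∑ᶠ n : ℤ, f n • F.Y a n b

/-- Coefficients of the formal derivative `∂_z f`. -/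
def derivCoef (f : ℤ → k) : ℤ → k := fun n => ((n : ℤ) + 1 : ℤ) • f (n + 1)

/-- The subspace `V_(g) V` spanned by all products `a_(g) b` with `g = ∂_z f`. -/
noncomputable def gSpan (F : VAData k V) (f : ℤ → k) : Submodule k V :=
  Submodule.span k {x : V | ∃ a b : V, x = fProduct F (derivCoef f) a b}

/-- `x ≡ y mod h^M`, where `h = r`. -/
def ModH (r : k) (M : ℕ) (x y : V) : Prop := ∃ v : V, x - y = r ^ M • v

/-- An automorphism of the (state-field data of a) vertex algebra `F`. -/
def IsVAAut (F : VAData k V) (φ : V ≃ₗ[k] V) : Prop :=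
  φ F.vac = F.vac ∧ (∀ v : V, φ (F.T v) = F.T (φ v)) ∧
  ∀ (a b : V) (n : ℤ), φ (F.Y a n b) = F.Y (φ a) n (φ b)

end Core

/-- The coefficients of `f(z) = z⁻¹`. -/
def zinvCoef (k : Type*) [CommRing k] : ℤ → k := fun n => if n = -1 then 1 else 0

/-- The coefficients of `f(z) = c·e^{cz}/(e^{cz}-1)
  = z⁻¹ + c + ∑_{m≥1} B_m c^m z^{m-1}/m!` (Bernoulli numbers `B_m`). -/
noncomputable def berCoef {k : Type*} [Field k] [CharZero k] (c : k) : ℤ → k := fun n =>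
  if n < -1 then 0
  else ((bernoulli (n + 1).toNat : ℚ) • (c ^ (n + 1).toNat)) / ((n + 1).toNat.factorial : k)
        + (if n = 0 then c else 0)

/-- `f(z) = z⁻¹` or `f(z) = c·e^{cz}/(e^{cz}-1)` with `c ≠ 0`. -/
def AdmissibleF {k : Type*} [Field k] [CharZero k] (f : ℤ → k) : Prop :=
  f = zinvCoef k ∨ ∃ c : k, c ≠ 0 ∧ f = berCoef c

section HopfDefs

variable {k : Type*} [CommRing k] {V : Type*} [AddCommGroup V] [Module k V]
variable (H : Type*) [Ring H] [HopfAlgebra k H]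

/-- `V` is an `H`-module field algebra: `h·1 = ε(h)1`, `h(Ta) = T(ha)` and
`h(aₙb) = ∑ (h₁a)ₙ(h₂b)` (the last condition quantified over all finite
representations of `Δ(h)`). -/
def IsHModuleFA [Module H V] [IsScalarTower k H V] (F : VAData k V) : Prop :=
  (∀ h : H, h • F.vac = (Coalgebra.counit (R := k) h) • F.vac) ∧
  (∀ (h : H) (a : V), h • (F.T a : V) = F.T (h • a)) ∧
  (∀ (h : H) (a b : V) (n : ℤ) (m : ℕ) (h1 h2 : Fin m → H),
      Coalgebra.comul (R := k) h = ∑ i, h1 i ⊗ₜ[k] h2 i →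
      h • (F.Y a n b : V) = ∑ i, F.Y (h1 i • a) n (h2 i • b))

/-- The smash product structure `V # H` on `V ⊗ H`:
`Y(a#h,z)(b#g) = ∑ Y(a,z)(h₁b) # h₂g`, vacuum `1#1`, translation `T#1`. -/
def SmashChar [Module H V] [IsScalarTower k H V] (F : VAData k V)
    (FS : VAData k (V ⊗[k] H)) : Prop :=
  (∀ (a b : V) (h g : H) (n : ℤ) (m : ℕ) (h1 h2 : Fin m → H),
      Coalgebra.comul (R := k) h = ∑ i, h1 i ⊗ₜ[k] h2 i →
      FS.Y (a ⊗ₜ[k] h) n (b ⊗ₜ[k] g) = ∑ i, (F.Y a n (h1 i • b) : V) ⊗ₜ[k] (h2 i * g)) ∧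
  (FS.vac = F.vac ⊗ₜ[k] (1 : H)) ∧
  (∀ (a : V) (h : H), FS.T (a ⊗ₜ[k] h) = (F.T a : V) ⊗ₜ[k] h)

end HopfDefs

/-- The fixed point subspace `V^H = {v | h v = ε(h) v for all h}`. -/
def hFixed (k V H : Type*) [CommRing k] [AddCommGroup V] [Module k V]
    [Ring H] [HopfAlgebra k H] [Module H V] [IsScalarTower k H V]
    [SMulCommClass k H V] : Submodule k V where
  carrier := {v : V | ∀ h : H, h • v = (Coalgebra.counit (R := k) h) • v}
  add_mem' := by
    intro a b ha hb h
    rw [smul_add, ha h, hb h, ← smul_add]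
  zero_mem' := by
    intro h
    simp
  smul_mem' := by
    intro c v hv h
    rw [← smul_comm c h v, hv h, smul_smul, smul_smul, mul_comm]

end HopfVA


namespace HopfVA

open Filter TensorProduct

section ZWMul

variable {V W : Type*} [AddCommGroup V] [AddCommGroup W]

theorem zwMul_add (n : ℕ) (f g : ℤ → ℤ → V) :
    zwMul n (f + g) = zwMul n f + zwMul n g := by
  ext p q
  simp [zwMul, Finset.sum_add_distrib]

theorem zwMul_sum {ι : Type*} (s : Finset ι) (n : ℕ) (f : ι → ℤ → ℤ → V) :
    zwMul n (∑ i ∈ s, f i) = ∑ i ∈ s, zwMul n (f i) := by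
  ext p q
  simp only [zwMul, Finset.sum_apply, Finset.smul_sum]
  exact Finset.sum_comm

theorem zwMul_map {G : Type*} [FunLike G V W] [AddMonoidHomClass G V W] (φ : G) (n : ℕ)
    (f : ℤ → ℤ → V) : zwMul n (fun p q => φ (f p q)) = fun p q => φ (zwMul n f p q) := by
  ext p q
  simp [zwMul, map_sum, map_zsmul]

theorem zwMul_succ (n : ℕ) (f : ℤ → ℤ → V) :
    zwMul (n + 1) f = fun p q => zwMul n f (p - 1) q - zwMul n f p (q - 1) := by
  ext p q
  let g : ℕ → ℕ → V := fun i j => (-1 : ℤ) ^ i • f (p - j) (q - i)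
  have coeff : ∀ (m i : ℕ) (x : V), ((-1 : ℤ) ^ i * (m.choose i : ℤ)) • x
      = m.choose i • (-1 : ℤ) ^ i • x := fun m i x => by
    rw [mul_comm, mul_smul, natCast_zsmul]
  simp only [zwMul, coeff]
  rw [sub_eq_add_neg, ← Finset.sum_neg_distrib]
  convert Finset.sum_choose_succ_nsmul g n using 2 with i hi
  · simp only [Finset.mem_range] at hi
    simp only [g, Nat.cast_sub (show i ≤ n + 1 by omega)]
  · refine Finset.sum_congr rfl fun i hi => ?_
    simp only [Finset.mem_range] at hi
    simp only [g, Nat.cast_sub (show i ≤ n + 1 by omega)]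
    congr 3; push_cast; ring
  · refine Finset.sum_congr rfl fun i hi => ?_
    simp only [Finset.mem_range] at hi
    simp only [g, Nat.cast_sub (show i ≤ n by omega), pow_succ, mul_neg_one, neg_smul, smul_neg]
    congr 4; push_cast; ring

theorem zwMul_eq_of_le {f g : ℤ → ℤ → V} {n N : ℕ} (h : zwMul n f = zwMul n g)
    (hN : n ≤ N) : zwMul N f = zwMul N g := by
  induction N, hN using Nat.le_induction with
  | base => exact h
  | succ N _ ih => rw [zwMul_succ, zwMul_succ, ih]

end ZWMul

theorem hasFiniteSupport_of_eventually_zero_shift {Y Z : Type*} [Zero Y] [Zero Z] {g : ℤ → Y}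
    {f : ℕ → Z} (hg : ∀ᶠ n in atTop, g n = 0) (q : ℤ)
    (hfg : ∀ j : ℕ, g ((j : ℤ) - 1 - q) = 0 → f j = 0) : f.HasFiniteSupport := by
  have hf : ∀ᶠ j : ℕ in atTop, f j = 0 :=
    ((tendsto_atTop_atTop.2 fun b => ⟨(b + 1 + q).toNat, fun j hj => by omega⟩).eventually
      hg).mono hfg
  rwa [← Nat.cofinite_eq_atTop, eventually_cofinite] at hf

section Transfer

variable {k : Type*} [CommRing k] {W X ι : Type*} [AddCommGroup W] [Module k W]
  [AddCommGroup X] [Module k X] {FS : VAData k W} {Mo : VModData k W X} {Φ : ι → W →ₗ[k] X}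

theorem forall_of_iSup_range_eq_top (hΦ : ⨆ i, LinearMap.range (Φ i) = ⊤) {P : X → Prop}
    (zero : P 0) (add : ∀ x y, P x → P y → P (x + y)) (range : ∀ i w, P (Φ i w)) (x : X) :
    P x :=
  Submodule.iSup_induction (motive := P) _ (hΦ ▸ Submodule.mem_top)
    (by rintro i _ ⟨w, rfl⟩; exact range i w) zero add

theorem VModData.mcompLHS_add (htr : ∀ v x, ∀ᶠ n in atTop, Mo.YM v n x = 0) (u v : W)
    (x y : X) : Mo.mcompLHS u v (x + y) = Mo.mcompLHS u v x + Mo.mcompLHS u v y := by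
  ext p q
  have fin : ∀ x, Function.HasFiniteSupport fun j : ℕ =>
      ibinom (p + j) j • Mo.YM u (-p - 1 - j) (Mo.YM v ((j : ℤ) - 1 - q) x) := fun x =>
    hasFiniteSupport_of_eventually_zero_shift (htr v x) q fun j hj => by simp [hj]
  simp only [VModData.mcompLHS, Pi.add_apply, map_add, smul_add,
    finsum_add_distrib (fin x) (fin y)]

theorem mcompLHS_apply_of_intertwine (htr : ∀ u w, ∀ᶠ n in atTop, FS.Y u n w = 0)
    (hY : ∀ i u n w, Mo.YM u n (Φ i w) = Φ i (FS.Y u n w)) (i : ι) (u v w : W) (p q : ℤ) :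
    Mo.mcompLHS u v (Φ i w) p q = Φ i (FS.compLHS u v w p q) := by
  have fin : Function.HasFiniteSupport fun j : ℕ =>
      ibinom (p + j) j • FS.Y u (-p - 1 - j) (FS.Y v ((j : ℤ) - 1 - q) w) :=
    hasFiniteSupport_of_eventually_zero_shift (htr v w) q fun j hj => by simp [hj]
  simp only [VModData.mcompLHS, VAData.compLHS, hY, map_zsmul, map_finsum _ fin]

theorem truncation_of_intertwine (hΦ : ⨆ i, LinearMap.range (Φ i) = ⊤)
    (hY : ∀ i u n w, Mo.YM u n (Φ i w) = Φ i (FS.Y u n w))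
    (htr : ∀ u w, ∀ᶠ n in atTop, FS.Y u n w = 0) (u : W) (x : X) :
    ∀ᶠ n in atTop, Mo.YM u n x = 0 := by
  induction x using forall_of_iSup_range_eq_top hΦ with
  | zero => simp
  | add x y hx hy => exact (hx.and hy).mono fun n h => by rw [map_add, h.1, h.2, add_zero]
  | range i w => exact (htr u w).mono fun n h => by rw [hY, h, map_zero]

theorem vacuum_of_intertwine (hΦ : ⨆ i, LinearMap.range (Φ i) = ⊤)
    (hY : ∀ i u n w, Mo.YM u n (Φ i w) = Φ i (FS.Y u n w))
    (hvac : ∀ w n, FS.Y FS.vac n w = if n = -1 then w else 0) (x : X) (n : ℤ) :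
    Mo.YM FS.vac n x = if n = -1 then x else 0 := by
  induction x using forall_of_iSup_range_eq_top hΦ with
  | zero => simp
  | add x y hx hy => rw [map_add, hx, hy]; split_ifs <;> simp
  | range i w => rw [hY, hvac]; split_ifs <;> simp

theorem translation_of_intertwine (hΦ : ⨆ i, LinearMap.range (Φ i) = ⊤)
    (hY : ∀ i u n w, Mo.YM u n (Φ i w) = Φ i (FS.Y u n w))
    (hT : ∀ i w, Mo.sM (Φ i w) = Φ i (FS.T w))
    (htrans : ∀ u w n, FS.T (FS.Y u n w) - FS.Y u n (FS.T w) = (-n : ℤ) • FS.Y u (n - 1) w)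
    (u : W) (x : X) (n : ℤ) :
    Mo.sM (Mo.YM u n x) - Mo.YM u n (Mo.sM x) = (-n : ℤ) • Mo.YM u (n - 1) x := by
  induction x using forall_of_iSup_range_eq_top hΦ with
  | zero => simp
  | add x y hx hy => simp only [map_add, smul_add, ← hx, ← hy]; abel
  | range i w => simp only [hY, hT, ← map_sub, htrans, map_zsmul]

theorem assoc_of_intertwine (hΦ : ⨆ i, LinearMap.range (Φ i) = ⊤)
    (hY : ∀ i u n w, Mo.YM u n (Φ i w) = Φ i (FS.Y u n w))
    (htr : ∀ u w, ∀ᶠ n in atTop, FS.Y u n w = 0) (hassoc : FS.IsAssocFA) (u v : W) (x : X) :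
    ∀ᶠ N in atTop, zwMul N (Mo.mcompLHS u v x) = zwMul N (Mo.mcompRHS FS u v x) := by
  induction x using forall_of_iSup_range_eq_top hΦ with
  | zero =>
    refine Eventually.of_forall fun N => congrArg (zwMul N) ?_
    ext p q
    simp [VModData.mcompLHS, VModData.mcompRHS]
  | add x y hx hy =>
    have hadd : Mo.mcompRHS FS u v (x + y) = Mo.mcompRHS FS u v x + Mo.mcompRHS FS u v y := by
      ext p q
      simp [VModData.mcompRHS]
    refine (hx.and hy).mono fun N h => ?_
    rw [Mo.mcompLHS_add (truncation_of_intertwine hΦ hY htr), hadd, zwMul_add, zwMul_add, h.1,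
      h.2]
  | range i w =>
    have hL : Mo.mcompLHS u v (Φ i w) = fun p q => Φ i (FS.compLHS u v w p q) :=
      funext₂ (mcompLHS_apply_of_intertwine htr hY i u v w)
    have hR : Mo.mcompRHS FS u v (Φ i w) = fun p q => Φ i (FS.compRHS u v w p q) := by
      ext p q
      simp [VModData.mcompRHS, VAData.compRHS, hY]
    obtain ⟨N, hN⟩ := hassoc u v w
    refine eventually_atTop.2 ⟨N, fun N' hN' => ?_⟩
    rw [hL, hR, zwMul_map, zwMul_map, zwMul_eq_of_le (funext₂ hN) hN']

theorem sLocal_of_intertwine (hΦ : ⨆ i, LinearMap.range (Φ i) = ⊤)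
    (hY : ∀ i u n w, Mo.YM u n (Φ i w) = Φ i (FS.Y u n w)) {u v : W}
    (hloc : FS.IsSLocalPair u v) : Mo.IsSLocalModPair u v := by
  obtain ⟨n, m, A, B, h⟩ := hloc
  refine ⟨n, m, A, B, fun x => ?_⟩
  induction x using forall_of_iSup_range_eq_top hΦ with
  | zero => simp [VModData.mprodZW, VModData.mprodWZ, zwMul]
  | add x y hx hy =>
    intro p q
    have hZW : Mo.mprodZW u v (x + y) = Mo.mprodZW u v x + Mo.mprodZW u v y := by
      ext; simp [VModData.mprodZW]
    have hWZ : ∀ a b, Mo.mprodWZ a b (x + y) = Mo.mprodWZ a b x + Mo.mprodWZ a b y := by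
      intro a b; ext; simp [VModData.mprodWZ]
    simp only [hZW, hWZ, zwMul_add, Pi.add_apply, hx p q, hy p q, Finset.sum_add_distrib]
  | range i w =>
    intro p q
    have hZW : Mo.mprodZW u v (Φ i w) = fun p q => Φ i (FS.prodZW u v w p q) := by
      ext; simp [VModData.mprodZW, VAData.prodZW, hY]
    have hWZ : ∀ a b, Mo.mprodWZ a b (Φ i w) = fun p q => Φ i (FS.prodWZ a b w p q) := by
      intro a b; ext; simp [VModData.mprodWZ, VAData.prodWZ, hY]
    simp only [hZW, hWZ, zwMul_map, h w p q, map_sum]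

end Transfer

section Locality

variable {k : Type*} [CommRing k] {V : Type*} [AddCommGroup V] [Module k V]
  {M : Type*} [AddCommGroup M] [Module k M]

theorem VAData.IsLocalPair.eventually {F : VAData k V} {a b : V} (h : F.IsLocalPair a b) :
    ∀ᶠ N in atTop, ∀ c, zwMul N (F.prodZW a b c) = zwMul N (F.prodWZ a b c) :=
  let ⟨n, hn⟩ := h
  eventually_atTop.2 ⟨n, fun _ hN c => zwMul_eq_of_le (funext₂ (hn c)) hN⟩

theorem zwMul_rTensor_comm {F : VAData k V} {a b : V} {N : ℕ}
    (h : ∀ c, zwMul N (F.prodZW a b c) = zwMul N (F.prodWZ a b c)) (y : V ⊗[k] M) :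
    zwMul N (fun p q => (F.Y a (-p - 1)).rTensor M ((F.Y b (-q - 1)).rTensor M y))
      = zwMul N (fun p q => (F.Y b (-q - 1)).rTensor M ((F.Y a (-p - 1)).rTensor M y)) := by
  induction y using TensorProduct.induction_on with
  | zero => simp only [map_zero]
  | tmul c x =>
    simp only [LinearMap.rTensor_tmul]
    change zwMul N (fun p q => (TensorProduct.mk k V M).flip x (F.prodZW a b c p q))
      = zwMul N (fun p q => (TensorProduct.mk k V M).flip x (F.prodWZ a b c p q))
    rw [zwMul_map, zwMul_map, h c]
  | add y y' hy hy' =>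
    simp only [map_add]
    exact (zwMul_add N _ _).trans ((congrArg₂ (· + ·) hy hy').trans (zwMul_add N _ _).symm)

end Locality

section Diagonal

variable {k : Type*} [CommRing k] {H : Type*} [Ring H] [Bialgebra k H]
  {V : Type*} [AddCommGroup V] [Module k V]
  {M : Type*} [AddCommGroup M] [Module k M] [Module H M] [IsScalarTower k H M]

variable (V) in
noncomputable def lTensorOrbit (x : M) : V ⊗[k] H →ₗ[k] V ⊗[k] M :=
  ((LinearMap.toSpanSingleton H M x).restrictScalars k).lTensor V

theorem iSup_range_lTensorOrbit :
    ⨆ x : M, LinearMap.range (lTensorOrbit (k := k) (H := H) V x) = ⊤ := by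
  refine eq_top_iff.2 (TensorProduct.span_tmul_eq_top k V M ▸ Submodule.span_le.2 ?_)
  rintro _ ⟨b, x, rfl⟩
  exact Submodule.mem_iSup_of_mem x ⟨b ⊗ₜ 1, by simp [lTensorOrbit]⟩

variable [Module H V] [IsScalarTower k H V]

variable (V M) in
noncomputable def diagAction : H →ₐ[k] Module.End k (V ⊗[k] M) :=
  Module.endTensorEndAlgHom.comp
    ((Algebra.TensorProduct.map (Algebra.lsmul k k V) (Algebra.lsmul k k M)).comp
      (Bialgebra.comulAlgHom k H))

theorem diagAction_tmul {h : H} {m : ℕ} {h1 h2 : Fin m → H}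
    (hrep : Coalgebra.comul (R := k) h = ∑ i, h1 i ⊗ₜ[k] h2 i) (b : V) (x : M) :
    diagAction V M h (b ⊗ₜ x) = ∑ i, (h1 i • b) ⊗ₜ[k] (h2 i • x) := by
  simp [diagAction, hrep, Module.endTensorEndAlgHom_apply]

theorem lTensor_comp_diagAction {N : Type*} [AddCommGroup N] [Module k N] [Module H N]
    [IsScalarTower k H N] (φ : M →ₗ[H] N) (h : H) :
    (φ.restrictScalars k).lTensor V ∘ₗ diagAction V M h
      = diagAction V N h ∘ₗ (φ.restrictScalars k).lTensor V := by
  ext b x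
  obtain ⟨m, h1, h2, hrep⟩ := exists_sum_tmul_eq (Coalgebra.comul (R := k) h)
  simp [diagAction_tmul hrep]

variable (H M) in
/-- `Y(a#h, z) = (Y(a, z) ⊗ id) ∘ h`, with `h` acting diagonally on `V ⊗ M`. -/
noncomputable def smashFields (F : VAData k V) :
    V ⊗[k] H →ₗ[k] ℤ → Module.End k (V ⊗[k] M) :=
  LinearMap.pi fun n => lift <|
    (LinearMap.mul k (Module.End k (V ⊗[k] M))).compl₁₂
      (LinearMap.rTensorHom M ∘ₗ LinearMap.proj n ∘ₗ F.Y) (diagAction V M).toLinearMap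

theorem smashFields_tmul (F : VAData k V) (a : V) (h : H) (n : ℤ) :
    smashFields H M F (a ⊗ₜ h) n = (F.Y a n).rTensor M * diagAction V M h :=
  rfl

theorem lTensor_comp_smashFields {N : Type*} [AddCommGroup N] [Module k N] [Module H N]
    [IsScalarTower k H N] (F : VAData k V) (φ : M →ₗ[H] N) (u : V ⊗[k] H) (n : ℤ) :
    (φ.restrictScalars k).lTensor V ∘ₗ smashFields H M F u n
      = smashFields H N F u n ∘ₗ (φ.restrictScalars k).lTensor V := by
  induction u using TensorProduct.induction_on with
  | zero => simp
  | tmul a h =>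
    simp only [smashFields_tmul, Module.End.mul_eq_comp, ← LinearMap.comp_assoc,
      LinearMap.lTensor_comp_rTensor, ← LinearMap.rTensor_comp_lTensor]
    rw [LinearMap.comp_assoc, lTensor_comp_diagAction, LinearMap.comp_assoc]
  | add u v hu hv =>
    simp only [map_add, Pi.add_apply, LinearMap.comp_add, LinearMap.add_comp, hu, hv]

theorem smashFields_lTensorOrbit (F : VAData k V) (x : M) (u : V ⊗[k] H) (n : ℤ)
    (w : V ⊗[k] H) :
    smashFields H M F u n (lTensorOrbit V x w) = lTensorOrbit V x (smashFields H H F u n w) :=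
  (LinearMap.congr_fun (lTensor_comp_smashFields F (LinearMap.toSpanSingleton H M x) u n) w).symm

variable (M) in
noncomputable def smashModule (F : VAData k V) : VModData k (V ⊗[k] H) (V ⊗[k] M) :=
  ⟨smashFields H M F, F.T.rTensor M⟩

end Diagonal

section Smash

variable {k : Type*} [CommRing k] {H : Type*} [Ring H] [HopfAlgebra k H]
  {V : Type*} [AddCommGroup V] [Module k V] [Module H V] [IsScalarTower k H V]
  {M : Type*} [AddCommGroup M] [Module k M] [Module H M] [IsScalarTower k H M]

theorem diagAction_mul_rTensor {F : VAData k V} (hHF : IsHModuleFA H F) {h : H} {m : ℕ}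
    {h1 h2 : Fin m → H} (hrep : Coalgebra.comul (R := k) h = ∑ i, h1 i ⊗ₜ[k] h2 i)
    (b : V) (n : ℤ) :
    diagAction V M h * (F.Y b n).rTensor M
      = ∑ i, (F.Y (h1 i • b) n).rTensor M * diagAction V M (h2 i) := by
  rw [Module.End.mul_eq_comp]
  ext c y
  choose mP P Q hPQ using fun i => exists_sum_tmul_eq (Coalgebra.comul (R := k) (h1 i))
  choose mR R S hRS using fun i => exists_sum_tmul_eq (Coalgebra.comul (R := k) (h2 i))
  have coassoc : ∑ i, ∑ j, (P i j ⊗ₜ[k] Q i j) ⊗ₜ[k] h2 i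
      = ∑ i, ∑ j, (h1 i ⊗ₜ[k] R i j) ⊗ₜ[k] S i j := by
    simpa [hrep, hPQ, hRS, tmul_sum, sum_tmul, map_sum] using
      (Coalgebra.coassoc_symm_apply (R := k) h).symm
  -- `T ((x ⊗ x') ⊗ x'') = Y(x • b)ₙ (x' • c) ⊗ x'' • y`
  let T : (H ⊗[k] H) ⊗[k] H →ₗ[k] V ⊗[k] M :=
    map (lift ((LinearMap.proj n ∘ₗ F.Y).compl₁₂ (LinearMap.id.smulRight b)
      (LinearMap.id.smulRight c))) (LinearMap.id.smulRight y)
  simpa [T, diagAction_tmul hrep, diagAction_tmul (hRS _), hHF.2.2 _ b c n _ _ _ (hPQ _),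
    map_sum, sum_tmul] using congrArg T coassoc

theorem smashModule_explicit_sLocal {F : VAData k V} (hloc : ∀ a b : V, F.IsLocalPair a b)
    (hHF : IsHModuleFA H F) (a b : V) (h g : H) {m : ℕ} {h1 h2 : Fin m → H}
    (hrep : Coalgebra.comul (R := k) h = ∑ i, h1 i ⊗ₜ[k] h2 i) :
    ∃ n : ℕ, ∀ (x : V ⊗[k] M) (p q : ℤ),
      zwMul n (VModData.mprodZW (smashModule M F) (a ⊗ₜ[k] h) (b ⊗ₜ[k] g) x) p q
        = ∑ i, zwMul n (VModData.mprodWZ (smashModule M F) (a ⊗ₜ[k] (h2 i * g))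
            ((h1 i • b) ⊗ₜ[k] (1 : H)) x) p q := by
  obtain ⟨n, hn⟩ := (eventually_all.2 fun i => (hloc a (h1 i • b)).eventually).exists
  refine ⟨n, fun x p q => ?_⟩
  have hZW : VModData.mprodZW (smashModule M F) (a ⊗ₜ[k] h) (b ⊗ₜ[k] g) x
      = ∑ i, fun p q => (F.Y a (-p - 1)).rTensor M ((F.Y (h1 i • b) (-q - 1)).rTensor M
          (diagAction V M (h2 i * g) x)) := by
    ext p q
    simp only [VModData.mprodZW, smashModule, smashFields_tmul, ← Module.End.mul_apply,
      ← mul_assoc, Finset.sum_apply]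
    rw [mul_assoc _ (diagAction V M h), diagAction_mul_rTensor hHF hrep]
    simp [Finset.mul_sum, Finset.sum_mul, mul_assoc]
  have hWZ : ∀ i, VModData.mprodWZ (smashModule M F) (a ⊗ₜ[k] (h2 i * g))
      ((h1 i • b) ⊗ₜ[k] (1 : H)) x
      = fun p q => (F.Y (h1 i • b) (-q - 1)).rTensor M ((F.Y a (-p - 1)).rTensor M
          (diagAction V M (h2 i * g) x)) := by
    intro i; ext p q
    simp [VModData.mprodWZ, smashModule, smashFields_tmul]
  simp only [hZW, zwMul_sum, Finset.sum_apply]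
  refine Finset.sum_congr rfl fun i _ => ?_
  rw [hWZ, zwMul_rTensor_comm (hn i) (diagAction V M (h2 i * g) x)]

theorem SmashChar.Y_eq {F : VAData k V} {FS : VAData k (V ⊗[k] H)} (hFS : SmashChar H F FS) :
    FS.Y = smashFields H H F := by
  refine TensorProduct.ext' fun a h => funext fun n => TensorProduct.ext' fun b g => ?_
  obtain ⟨m, h1, h2, hrep⟩ := exists_sum_tmul_eq (Coalgebra.comul (R := k) h)
  simp [hFS.1 a b h g n m h1 h2 hrep, smashFields_tmul, diagAction_tmul hrep]

theorem SmashChar.T_eq {F : VAData k V} {FS : VAData k (V ⊗[k] H)} (hFS : SmashChar H F FS) :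
    FS.T = F.T.rTensor H :=
  TensorProduct.ext' hFS.2.2

theorem smashModule_YM_lTensorOrbit {F : VAData k V} {FS : VAData k (V ⊗[k] H)}
    (hFS : SmashChar H F FS) (x : M) (u : V ⊗[k] H) (n : ℤ) (w : V ⊗[k] H) :
    (smashModule M F).YM u n (lTensorOrbit V x w) = lTensorOrbit V x (FS.Y u n w) := by
  rw [hFS.Y_eq]
  exact smashFields_lTensorOrbit F x u n w

theorem smashModule_isModule {F : VAData k V} {FS : VAData k (V ⊗[k] H)}
    (hFS : SmashChar H F FS) (hFA : FS.IsFieldAlgebra) : (smashModule M F).IsModule FS := by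
  obtain ⟨⟨htr, hvac, -, -, -, hT₁, hT₂⟩, hassoc⟩ := hFA
  have hY := smashModule_YM_lTensorOrbit (M := M) hFS
  have htr' : ∀ u w, ∀ᶠ n in atTop, FS.Y u n w = 0 := fun u w => eventually_atTop.2 (htr u w)
  have hΦ := iSup_range_lTensorOrbit (k := k) (H := H) (V := V) (M := M)
  refine ⟨fun u x => eventually_atTop.1 (truncation_of_intertwine hΦ hY htr' u x),
    vacuum_of_intertwine hΦ hY hvac, translation_of_intertwine hΦ hY ?_ ?_, fun u v x => ?_⟩
  · intro x w
    rw [hFS.T_eq]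
    exact (LinearMap.congr_fun (LinearMap.rTensor_comp_lTensor ..) w).trans
      (LinearMap.congr_fun (LinearMap.lTensor_comp_rTensor ..) w).symm
  · exact fun u w n => (hT₁ u w n).symm.trans (hT₂ u w n)
  · obtain ⟨N, hN⟩ := (assoc_of_intertwine hΦ hY htr' hassoc u v x).exists
    exact ⟨N, fun p q => congrFun₂ hN p q⟩

end Smash

theorem statement13_general {k : Type*} [Field k]
    {V : Type*} [AddCommGroup V] [Module k V]
    {H : Type*} [Ring H] [HopfAlgebra k H]
    [Module H V] [IsScalarTower k H V]
    {M : Type*} [AddCommGroup M] [Module k M]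
    [Module H M] [IsScalarTower k H M]
    (F : VAData k V) (hF : F.IsVertexAlgebra) (hHF : IsHModuleFA H F)
    (FS : VAData k (V ⊗[k] H)) (hFS : SmashChar H F FS) (hFSla : FS.IsSLocalVA) :
    ∃ Mo : VModData k (V ⊗[k] H) (V ⊗[k] M),
      (∀ (a : V) (h : H) (b : V) (x : M) (n : ℤ) (m : ℕ) (h1 h2 : Fin m → H),
        Coalgebra.comul (R := k) h = ∑ i, h1 i ⊗ₜ[k] h2 i →
        Mo.YM (a ⊗ₜ[k] h) n (b ⊗ₜ[k] x)
          = ∑ i, (F.Y a n (h1 i • b) : V) ⊗ₜ[k] (h2 i • x)) ∧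
      (∀ (b : V) (x : M), Mo.sM (b ⊗ₜ[k] x) = (F.T b : V) ⊗ₜ[k] x) ∧
      VModData.IsModule FS Mo ∧
      -- the explicit module S-locality
      (∀ (a b : V) (h g : H) (m : ℕ) (h1 h2 : Fin m → H),
        Coalgebra.comul (R := k) h = ∑ i, h1 i ⊗ₜ[k] h2 i →
        ∃ n : ℕ, ∀ (x : V ⊗[k] M) (p q : ℤ),
          zwMul n (VModData.mprodZW Mo (a ⊗ₜ[k] h) (b ⊗ₜ[k] g) x) p q
            = ∑ i, zwMul n
                (VModData.mprodWZ Mo (a ⊗ₜ[k] (h2 i * g)) ((h1 i • b) ⊗ₜ[k] (1 : H)) x)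
                p q) ∧
      (∀ u w : V ⊗[k] H, VModData.IsSLocalModPair Mo u w) := by
  refine ⟨smashModule M F, fun a h b x n m h1 h2 hrep => ?_, fun b x => rfl,
    smashModule_isModule hFS hFSla.1,
    fun a b h g m h1 h2 hrep => smashModule_explicit_sLocal hF.2 hHF a b h g hrep, fun u w => ?_⟩
  · simp [smashModule, smashFields_tmul, diagAction_tmul hrep]
  · exact sLocal_of_intertwine iSup_range_lTensorOrbit (smashModule_YM_lTensorOrbit hFS)
      (hFSla.2 u w)

/-- If `M` is a left `H`-module and `V` an `H`-module vertex algebra,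
then `V ⊗ M` with `Y_{V⊗M}(a#h,z)(b⊗m) = ∑ Y(a,z)(h₁b) ⊗ h₂m` and translation `s ⊗ Id`
is a left module over the `S`-local vertex algebra `V#H`, satisfying in particular the
module `S`-locality
`(z-w)ⁿ Y(a#h,z)Y(b#g,w) = (z-w)ⁿ ∑ Y(h₁b#1,w)Y(a#h₂g,z)` on `V ⊗ M`. -/
theorem statement13 {k : Type*} [Field k] [CharZero k]
    {V : Type*} [AddCommGroup V] [Module k V]
    {H : Type*} [Ring H] [HopfAlgebra k H]
    [Module H V] [IsScalarTower k H V] [SMulCommClass k H V]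
    {M : Type*} [AddCommGroup M] [Module k M]
    [Module H M] [IsScalarTower k H M] [SMulCommClass k H M]
    (F : VAData k V) (hF : F.IsVertexAlgebra) (hHF : IsHModuleFA H F)
    (FS : VAData k (V ⊗[k] H)) (hFS : SmashChar H F FS) (hFSla : FS.IsSLocalVA) :
    ∃ Mo : VModData k (V ⊗[k] H) (V ⊗[k] M),
      (∀ (a : V) (h : H) (b : V) (x : M) (n : ℤ) (m : ℕ) (h1 h2 : Fin m → H),
        Coalgebra.comul (R := k) h = ∑ i, h1 i ⊗ₜ[k] h2 i →
        Mo.YM (a ⊗ₜ[k] h) n (b ⊗ₜ[k] x)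
          = ∑ i, (F.Y a n (h1 i • b) : V) ⊗ₜ[k] (h2 i • x)) ∧
      (∀ (b : V) (x : M), Mo.sM (b ⊗ₜ[k] x) = (F.T b : V) ⊗ₜ[k] x) ∧
      VModData.IsModule FS Mo ∧
      -- the explicit module S-locality
      (∀ (a b : V) (h g : H) (m : ℕ) (h1 h2 : Fin m → H),
        Coalgebra.comul (R := k) h = ∑ i, h1 i ⊗ₜ[k] h2 i →
        ∃ n : ℕ, ∀ (x : V ⊗[k] M) (p q : ℤ),
          zwMul n (VModData.mprodZW Mo (a ⊗ₜ[k] h) (b ⊗ₜ[k] g) x) p q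
            = ∑ i, zwMul n
                (VModData.mprodWZ Mo (a ⊗ₜ[k] (h2 i * g)) ((h1 i • b) ⊗ₜ[k] (1 : H)) x)
                p q) ∧
      (∀ u w : V ⊗[k] H, VModData.IsSLocalModPair Mo u w) :=
  statement13_general F hF hHF FS hFS hFSla

end HopfVA
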